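/- Let η be the power series with coefficients η₀ = 1, η_n = 0 for all odd n, and η_{n+2} = (n-1)/(n+2)² · η_n for all n ≥ 0. Then: η ∈ X_r for all r > 0; η_n < 0 for all even n ≥ 2; for all 0 < r₁ < r₂ the kernel of L : X_{r₂} → X_{r₁} equals {c η : c ∈ ℝ}; the function J := 1 - η = Σ_{n≥2} |η_n| xⁿ satisfies L J(x) = 1 for all x > 0, J(0) = J'(0) = 0, J''(0) = 1/2, all derivatives J^{(k)}(x) > 0 for all x > 0 and all k ≥ 0, and ‖J‖_r ≤ (1/2) r e^{r²/2} for every r > 0. -/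

import Mathlib

open Set

/-- The `X_r` norm of a coefficient sequence: `‖f‖_r = Σ_n |f_n| ⟨n⟩ r^{n-1}`,
where `⟨n⟩ = max{1, n}`. -/
noncomputable def Xnorm (r : ℝ) (f : ℕ → ℝ) : ℝ :=
  ∑' n : ℕ, |f n| * max 1 (n : ℝ) * r ^ ((n : ℤ) - 1)

/-- Membership in `X_r`: the coefficient sequence is even (vanishes on odd indices)
and has finite `X_r` norm. -/
def MemX (r : ℝ) (f : ℕ → ℝ) : Prop :=
  (∀ n, Odd n → f n = 0) ∧
  Summable (fun n : ℕ => |f n| * max 1 (n : ℝ) * r ^ ((n : ℤ) - 1))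

/-- Action of the operator `L h = h'' + h'(1/x - x) + h` on coefficient sequences:
the `n`-th coefficient of `L f` is `(n+2)² f_{n+2} - (n-1) f_n`. -/
def Lcoef (f : ℕ → ℝ) (n : ℕ) : ℝ :=
  ((n : ℝ) + 2) ^ 2 * f (n + 2) - ((n : ℝ) - 1) * f n

/-- The sequence `η`: `η₀ = 1`, `η_n = 0` for odd `n`, `η_{n+2} = (n-1)/(n+2)² η_n`. -/
noncomputable def eta : ℕ → ℝ
  | 0 => 1
  | 1 => 0
  | n + 2 => ((n : ℝ) - 1) / ((n : ℝ) + 2) ^ 2 * eta n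

/-- Coefficients of `J := 1 - η`. -/
noncomputable def Jcoef (n : ℕ) : ℝ := (if n = 0 then 1 else 0) - eta n

/-- The function `J(x) = Σ_n J_n xⁿ`. -/
noncomputable def Jfun (x : ℝ) : ℝ := ∑' n : ℕ, Jcoef n * x ^ n

/-!
The recursion `η_{n+2} = (n-1)/(n+2)² η_n` has the factor `-1/4` at `n = 0` and positive
factors at even `n ≥ 2`, so `η₂ = -1/4` and every later even coefficient is negative; hence
`J = 1 - η` has nonnegative coefficients, positive at each even index `≥ 2`, and all its
derivatives are positive on `x > 0`. The factors are also at most `1/(n+2)`, which gives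
`J_{2m} ≤ 2^{-(m+1)}/m!`: the `X_r`-norm of `J` is then dominated termwise by
`(r/2) ∑ (r²/2)^k/k!`, and `J` is entire, so `L` may be applied to it coefficientwise, where
`L 1 = 1` and `L η = 0`. Conversely `Lcoef f = 0` is exactly the recursion of `η`, and `f₁ = 0`
for even `f`, so the kernel is spanned by `η`.
-/

open scoped Nat

noncomputable def powerSum (a : ℕ → ℝ) (x : ℝ) : ℝ := ∑' n, a n * x ^ n

def derivCoeff (a : ℕ → ℝ) (n : ℕ) : ℝ := (n + 1) * a (n + 1)

def IsEntireCoeff (a : ℕ → ℝ) : Prop := ∀ R : ℝ, 0 < R → Summable fun n => |a n| * R ^ n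

section PowerSeries

variable {a : ℕ → ℝ}

theorem IsEntireCoeff.summable_mul_pow (ha : IsEntireCoeff a) (x : ℝ) :
    Summable fun n => a n * x ^ n := by
  refine .of_norm_bounded (ha (|x| + 1) (by positivity)) fun n => ?_
  rw [Real.norm_eq_abs, abs_mul, abs_pow]
  gcongr
  linarith

theorem IsEntireCoeff.hasSum (ha : IsEntireCoeff a) (x : ℝ) :
    HasSum (fun n => a n * x ^ n) (powerSum a x) :=
  (ha.summable_mul_pow x).hasSum

theorem IsEntireCoeff.shift (ha : IsEntireCoeff a) : IsEntireCoeff fun n => a (n + 1) := by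
  intro R hR
  refine (((summable_nat_add_iff 1).mpr (ha R hR)).mul_right R⁻¹).congr fun n => ?_
  field_simp
  ring

theorem IsEntireCoeff.derivCoeff (ha : IsEntireCoeff a) : IsEntireCoeff (derivCoeff a) := by
  intro R hR
  refine .of_nonneg_of_le (fun n => by positivity) (fun n => ?_) (ha.shift (2 * R) (by positivity))
  have hn : (n : ℝ) + 1 ≤ 2 ^ n := by exact_mod_cast Nat.lt_two_pow_self
  rw [_root_.derivCoeff, abs_mul, abs_of_pos (by positivity : (0 : ℝ) < n + 1), mul_pow]
  calc ((n : ℝ) + 1) * |a (n + 1)| * R ^ n ≤ 2 ^ n * |a (n + 1)| * R ^ n := by gcongr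
    _ = |a (n + 1)| * (2 ^ n * R ^ n) := by ring

theorem IsEntireCoeff.iterate_derivCoeff (ha : IsEntireCoeff a) (k : ℕ) :
    IsEntireCoeff (_root_.derivCoeff^[k] a) := by
  induction k generalizing a with
  | zero => exact ha
  | succ k ih => exact ih ha.derivCoeff

theorem hasDerivAt_powerSum (ha : IsEntireCoeff a) (x : ℝ) :
    HasDerivAt (powerSum a) (powerSum (derivCoeff a) x) x := by
  set R := |x| + 1
  have hx : x ∈ Set.Ioo (-R) R := abs_lt.mp (by simp [R])
  have hu : Summable fun n => |a n| * n * R ^ (n - 1) :=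
    (summable_nat_add_iff 1).mp <| (ha.derivCoeff R (by positivity)).congr fun n => by
      rw [derivCoeff, abs_mul, abs_of_pos (by positivity : (0 : ℝ) < n + 1)]
      push_cast
      ring_nf
  have hbound : ∀ n, ∀ y ∈ Set.Ioo (-R) R,
      ‖a n * (n * y ^ (n - 1))‖ ≤ |a n| * n * R ^ (n - 1) := by
    intro n y hy
    rw [Real.norm_eq_abs, abs_mul, abs_mul, abs_pow, Nat.abs_cast, ← mul_assoc]
    gcongr
    exact (abs_lt.mpr hy).le
  have hterm : HasSum (fun n => a n * (n * x ^ (n - 1))) (powerSum (derivCoeff a) x) := by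
    have h := HasSum.zero_add (f := fun n => a n * (n * x ^ (n - 1)))
      (by simpa [derivCoeff, mul_comm, mul_left_comm] using ha.derivCoeff.hasSum x)
    simpa using h
  rw [← hterm.tsum_eq]
  exact hasDerivAt_tsum_of_isPreconnected hu isOpen_Ioo isPreconnected_Ioo
    (fun n y _ => (hasDerivAt_pow n y).const_mul (a n)) hbound hx (ha.summable_mul_pow x) hx

theorem deriv_powerSum (ha : IsEntireCoeff a) : deriv (powerSum a) = powerSum (derivCoeff a) :=
  funext fun x => (hasDerivAt_powerSum ha x).deriv

theorem iteratedDeriv_powerSum (ha : IsEntireCoeff a) (k : ℕ) :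
    iteratedDeriv k (powerSum a) = powerSum (derivCoeff^[k] a) := by
  induction k generalizing a with
  | zero => rfl
  | succ k ih => rw [iteratedDeriv_succ', deriv_powerSum ha, ih ha.derivCoeff]; rfl

theorem powerSum_apply_zero (a : ℕ → ℝ) : powerSum a 0 = a 0 := by
  rw [powerSum, tsum_eq_single 0 fun n hn => by simp [hn]]
  simp

theorem derivCoeff_iterate_apply (k n : ℕ) :
    derivCoeff^[k] a n = (n + k).descFactorial k * a (n + k) := by
  induction k generalizing a with
  | zero => simp
  | succ k ih =>
    rw [Function.iterate_succ_apply, ih, derivCoeff, ← add_assoc, Nat.succ_descFactorial_succ]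
    push_cast
    ring

theorem hasSum_mul_pow_of_shift {x s : ℝ} (h : HasSum (fun n => a (n + 1) * x ^ n) s) :
    HasSum (fun n => a n * x ^ n) (a 0 + x * s) := by
  have h' : HasSum (fun n => a (n + 1) * x ^ (n + 1)) (x * s) := by
    rw [show (fun n => a (n + 1) * x ^ (n + 1)) = fun n => x * (a (n + 1) * x ^ n) from
      funext fun n => by ring]
    exact h.mul_left x
  simpa using HasSum.zero_add (f := fun n => a n * x ^ n) h'

/-- Away from `0`, `Lcoef a` are the Taylor coefficients of `L (powerSum a)`; the hypothesis
`a 1 = 0` removes the pole of `h'(x)/x`. -/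
theorem hasSum_Lcoef_mul_pow (ha : IsEntireCoeff a) (ha₁ : a 1 = 0) {x : ℝ} (hx : x ≠ 0) :
    HasSum (fun n => Lcoef a n * x ^ n) (powerSum (derivCoeff (derivCoeff a)) x +
      powerSum (derivCoeff a) x * (1 / x - x) + powerSum a x) := by
  set Q := powerSum (fun n => derivCoeff a (n + 1)) x
  have hQ : HasSum (fun n => derivCoeff a (n + 1) * x ^ n) Q := ha.derivCoeff.shift.hasSum x
  have hP₁ : powerSum (derivCoeff a) x = x * Q := by
    have h₀ : derivCoeff a 0 = 0 := by simp [derivCoeff, ha₁]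
    simpa [h₀] using (ha.derivCoeff.hasSum x).unique (hasSum_mul_pow_of_shift hQ)
  have hN : HasSum (fun n => n * a n * x ^ n) (x * powerSum (derivCoeff a) x) := by
    simpa using hasSum_mul_pow_of_shift (a := fun n => n * a n)
      (by simpa [derivCoeff] using ha.derivCoeff.hasSum x)
  have hvalue : powerSum (derivCoeff a) x * (1 / x - x) = Q - x * powerSum (derivCoeff a) x := by
    rw [hP₁]
    field_simp
  rw [hvalue, ← add_sub_assoc]
  refine (funext fun n => ?_ : (fun n => Lcoef a n * x ^ n) = _) ▸
    (((ha.derivCoeff.derivCoeff.hasSum x).add hQ).sub hN).add (ha.hasSum x)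
  simp only [Lcoef, derivCoeff]
  push_cast
  ring

end PowerSeries

theorem eta_add_two (n : ℕ) : eta (n + 2) = ((n : ℝ) - 1) / ((n : ℝ) + 2) ^ 2 * eta n := rfl

theorem eta_odd : ∀ {n : ℕ}, Odd n → eta n = 0
  | 0, h => absurd h (by decide)
  | 1, _ => rfl
  | n + 2, h => by rw [eta_add_two, eta_odd ((Nat.odd_add.mp h).mpr even_two), mul_zero]

theorem eta_neg : ∀ {n : ℕ}, Even n → 2 ≤ n → eta n < 0
  | 2, _, _ => by norm_num [eta_add_two, eta]
  | n + 4, h, _ => by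
    have ih := eta_neg (n := n + 2)
      (by obtain ⟨k, hk⟩ := h; exact ⟨k - 1, by omega⟩) (by omega)
    rw [eta_add_two]
    exact mul_neg_of_pos_of_neg (div_pos (by push_cast; linarith) (by positivity)) ih
  | 0, _, h | 1, _, h => by omega
  | 3, h, _ => absurd h (by decide)

theorem Lcoef_eta (n : ℕ) : Lcoef eta n = 0 := by
  rw [Lcoef, eta_add_two]
  field_simp
  ring

theorem Jcoef_zero : Jcoef 0 = 0 := by simp [Jcoef, eta]

theorem Jcoef_of_ne_zero {n : ℕ} (hn : n ≠ 0) : Jcoef n = -eta n := by simp [Jcoef, hn]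

theorem Jcoef_odd {n : ℕ} (hn : Odd n) : Jcoef n = 0 := by
  rw [Jcoef_of_ne_zero (by rintro rfl; exact Nat.not_odd_zero hn), eta_odd hn, neg_zero]

theorem Jcoef_add_two {n : ℕ} (hn : n ≠ 0) :
    Jcoef (n + 2) = ((n : ℝ) - 1) / ((n : ℝ) + 2) ^ 2 * Jcoef n := by
  rw [Jcoef_of_ne_zero hn, Jcoef_of_ne_zero (by omega), eta_add_two, mul_neg]

theorem Jcoef_eq_abs_eta {n : ℕ} (hn : 2 ≤ n) : Jcoef n = |eta n| := by
  rw [Jcoef_of_ne_zero (by omega)]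
  rcases Nat.even_or_odd n with he | ho
  · rw [abs_of_neg (eta_neg he hn)]
  · rw [eta_odd ho, neg_zero, abs_zero]

theorem Jcoef_nonneg (n : ℕ) : 0 ≤ Jcoef n := by
  rcases lt_or_ge n 2 with hn | hn
  · interval_cases n
    · rw [Jcoef_zero]
    · rw [Jcoef_odd odd_one]
  · rw [Jcoef_eq_abs_eta hn]
    exact abs_nonneg _

theorem Jcoef_pos {n : ℕ} (he : Even n) (hn : 2 ≤ n) : 0 < Jcoef n := by
  rw [Jcoef_of_ne_zero (by omega), neg_pos]
  exact eta_neg he hn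

theorem Lcoef_Jcoef (n : ℕ) : Lcoef Jcoef n = if n = 0 then 1 else 0 := by
  rcases eq_or_ne n 0 with rfl | hn
  · norm_num [Lcoef, Jcoef, eta_add_two, eta]
  · rw [if_neg hn, Lcoef, Jcoef_of_ne_zero hn, Jcoef_of_ne_zero (by omega), ← neg_eq_zero,
      ← Lcoef_eta n, Lcoef]
    ring

theorem Jcoef_add_two_le {n : ℕ} (hn : n ≠ 0) : Jcoef (n + 2) ≤ Jcoef n / (n + 2) := by
  have hratio : ((n : ℝ) - 1) / ((n : ℝ) + 2) ^ 2 ≤ 1 / ((n : ℝ) + 2) := by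
    rw [div_le_div_iff₀ (by positivity) (by positivity)]
    nlinarith
  rw [Jcoef_add_two hn, div_eq_mul_one_div (Jcoef n), mul_comm (Jcoef n)]
  exact mul_le_mul_of_nonneg_right hratio (Jcoef_nonneg n)

theorem Jcoef_two_mul_le : ∀ m : ℕ, Jcoef (2 * m) ≤ 1 / (2 ^ (m + 1) * m !)
  | 0 => by norm_num [Jcoef_zero]
  | 1 => by norm_num [Jcoef, eta_add_two, eta]
  | m + 2 => calc
      Jcoef (2 * (m + 1) + 2) ≤ Jcoef (2 * (m + 1)) / (2 * (m + 1) + 2 : ℕ) := by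
        exact_mod_cast Jcoef_add_two_le (by omega)
      _ ≤ 1 / (2 ^ (m + 2) * (m + 1)!) / (2 * (m + 1) + 2 : ℕ) := by
        gcongr
        exact Jcoef_two_mul_le (m + 1)
      _ = 1 / (2 ^ (m + 2 + 1) * (m + 2)!) := by
        rw [Nat.factorial_succ (m + 1)]
        push_cast
        field_simp
        ring

section Norm

noncomputable def xnormTerm (r : ℝ) (f : ℕ → ℝ) (n : ℕ) : ℝ :=
  |f n| * max 1 (n : ℝ) * r ^ ((n : ℤ) - 1)

variable {r : ℝ} {f : ℕ → ℝ}

theorem xnormTerm_nonneg (hr : 0 < r) (f : ℕ → ℝ) (n : ℕ) : 0 ≤ xnormTerm r f n :=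
  mul_nonneg (mul_nonneg (abs_nonneg _) (by positivity)) (zpow_pos hr _).le

theorem MemX.const_mul (hf : MemX r f) (c : ℝ) : MemX r fun n => c * f n :=
  ⟨fun n hn => show c * f n = 0 by rw [hf.1 n hn, mul_zero],
    (hf.2.mul_left |c|).congr fun n => by rw [abs_mul]; ring⟩

theorem abs_mul_pow_le_xnormTerm (hr : 0 < r) (n : ℕ) :
    |f n| * r ^ n ≤ r * xnormTerm r f n := by
  have hzpow : r * r ^ ((n : ℤ) - 1) = r ^ n := by
    rw [zpow_sub_one₀ hr.ne', zpow_natCast]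
    field_simp
  calc |f n| * r ^ n = r * (|f n| * 1 * r ^ ((n : ℤ) - 1)) := by rw [← hzpow]; ring
    _ ≤ r * xnormTerm r f n := by
      unfold xnormTerm
      gcongr
      exact le_max_left _ _

theorem isEntireCoeff_of_memX (hf : ∀ r, 0 < r → MemX r f) : IsEntireCoeff f := fun R hR =>
  .of_nonneg_of_le (fun n => by positivity) (fun n => abs_mul_pow_le_xnormTerm hR n)
    (((hf R hR).2).mul_left R)

theorem xnormTerm_Jcoef_le (hr : 0 < r) (k : ℕ) :
    xnormTerm r Jcoef (2 * (k + 1)) ≤ r / 2 * ((r ^ 2 / 2) ^ k / k !) := by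
  have hexp : ((2 * (k + 1) : ℕ) : ℤ) - 1 = (2 * k + 1 : ℕ) := by push_cast; ring
  rw [xnormTerm, abs_of_nonneg (Jcoef_nonneg _), hexp, zpow_natCast,
    max_eq_right (by push_cast; linarith)]
  calc Jcoef (2 * (k + 1)) * (2 * (k + 1) : ℕ) * r ^ (2 * k + 1)
      ≤ 1 / (2 ^ (k + 1 + 1) * (k + 1)!) * (2 * (k + 1) : ℕ) * r ^ (2 * k + 1) := by
        gcongr
        exact Jcoef_two_mul_le (k + 1)
    _ = r / 2 * ((r ^ 2 / 2) ^ k / k !) := by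
        rw [Nat.factorial_succ, div_pow, ← pow_mul]
        push_cast
        field_simp
        ring

theorem xnormTerm_Jcoef_eq_zero {n : ℕ} (hn : n ∉ Set.range fun k => 2 * (k + 1)) :
    xnormTerm r Jcoef n = 0 := by
  suffices Jcoef n = 0 by simp [xnormTerm, this]
  rcases Nat.even_or_odd' n with ⟨k, rfl | rfl⟩
  · rcases k with _ | k
    · exact Jcoef_zero
    · exact absurd ⟨k, rfl⟩ hn
  · exact Jcoef_odd (odd_two_mul_add_one k)

theorem summable_xnormTerm_Jcoef_two_mul (hr : 0 < r) :
    Summable fun k => xnormTerm r Jcoef (2 * (k + 1)) :=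
  .of_nonneg_of_le (fun _ => xnormTerm_nonneg hr _ _) (xnormTerm_Jcoef_le hr)
    ((Real.summable_pow_div_factorial _).mul_left _)

theorem hasSum_xnormTerm_Jcoef (hr : 0 < r) :
    HasSum (xnormTerm r Jcoef) (∑' k, xnormTerm r Jcoef (2 * (k + 1))) :=
  (Function.Injective.hasSum_iff (fun _ _ h => by simpa using h)
    fun _ hn => xnormTerm_Jcoef_eq_zero hn).mp (summable_xnormTerm_Jcoef_two_mul hr).hasSum

theorem memX_Jcoef (hr : 0 < r) : MemX r Jcoef :=
  ⟨fun _ => Jcoef_odd, (hasSum_xnormTerm_Jcoef hr).summable⟩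

theorem Xnorm_Jcoef_le (hr : 0 < r) : Xnorm r Jcoef ≤ 1 / 2 * r * Real.exp (r ^ 2 / 2) :=
  calc Xnorm r Jcoef = ∑' k, xnormTerm r Jcoef (2 * (k + 1)) :=
        (hasSum_xnormTerm_Jcoef hr).tsum_eq
    _ ≤ ∑' k : ℕ, r / 2 * ((r ^ 2 / 2) ^ k / k !) :=
      (summable_xnormTerm_Jcoef_two_mul hr).tsum_le_tsum (xnormTerm_Jcoef_le hr)
        ((Real.summable_pow_div_factorial _).mul_left _)
    _ = 1 / 2 * r * Real.exp (r ^ 2 / 2) := by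
      rw [tsum_mul_left, Real.exp_eq_exp_ℝ, NormedSpace.exp_eq_tsum_div]
      ring

theorem memX_eta (hr : 0 < r) : MemX r eta := by
  refine ⟨fun _ => eta_odd, (summable_nat_add_iff 1).mp ?_⟩
  refine ((summable_nat_add_iff 1).mpr (memX_Jcoef hr).2).congr fun n => ?_
  simp [Jcoef_of_ne_zero n.succ_ne_zero]

end Norm

theorem eq_mul_eta_of_Lcoef_eq_zero {f : ℕ → ℝ} (h₁ : f 1 = 0) (hL : ∀ n, Lcoef f n = 0) :
    ∀ n, f n = f 0 * eta n
  | 0 => by rw [eta, mul_one]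
  | 1 => by rw [h₁, eta, mul_zero]
  | n + 2 => by
    have hrec := hL n
    rw [Lcoef, sub_eq_zero] at hrec
    rw [eta_add_two, mul_left_comm, ← eq_mul_eta_of_Lcoef_eq_zero h₁ hL n, div_mul_eq_mul_div,
      eq_div_iff (by positivity), mul_comm, hrec]

theorem setOf_memX_Lcoef_eq_zero {r : ℝ} (hr : 0 < r) :
    {f : ℕ → ℝ | MemX r f ∧ ∀ n, Lcoef f n = 0} =
      {f | ∃ c : ℝ, f = fun n => c * eta n} := by
  ext f
  constructor
  · rintro ⟨hf, hL⟩
    exact ⟨f 0, funext (eq_mul_eta_of_Lcoef_eq_zero (hf.1 1 odd_one) hL)⟩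
  · rintro ⟨c, rfl⟩
    refine ⟨(memX_eta hr).const_mul c, fun n => ?_⟩
    have h := Lcoef_eta n
    rw [Lcoef] at h ⊢
    linear_combination c * h

theorem isEntireCoeff_Jcoef : IsEntireCoeff Jcoef := isEntireCoeff_of_memX fun _ => memX_Jcoef

theorem Jfun_eq_powerSum : Jfun = powerSum Jcoef := rfl

theorem L_Jfun_eq_one {x : ℝ} (hx : 0 < x) :
    deriv (deriv Jfun) x + deriv Jfun x * (1 / x - x) + Jfun x = 1 := by
  rw [Jfun_eq_powerSum, deriv_powerSum isEntireCoeff_Jcoef,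
    deriv_powerSum isEntireCoeff_Jcoef.derivCoeff]
  refine (hasSum_Lcoef_mul_pow isEntireCoeff_Jcoef (Jcoef_odd odd_one) hx.ne').unique ?_
  have hδ : (fun n => Lcoef Jcoef n * x ^ n) = fun n => if n = 0 then 1 else 0 := by
    funext n
    rcases eq_or_ne n 0 with rfl | hn <;> simp [Lcoef_Jcoef, *]
  rw [hδ]
  exact hasSum_ite_eq 0 1

theorem Jfun_zero : Jfun 0 = 0 := by
  rw [Jfun_eq_powerSum, powerSum_apply_zero, Jcoef_zero]

theorem deriv_Jfun_zero : deriv Jfun 0 = 0 := by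
  rw [Jfun_eq_powerSum, deriv_powerSum isEntireCoeff_Jcoef, powerSum_apply_zero]
  simp [derivCoeff, Jcoef_odd odd_one]

theorem deriv_deriv_Jfun_zero : deriv (deriv Jfun) 0 = 1 / 2 := by
  rw [Jfun_eq_powerSum, deriv_powerSum isEntireCoeff_Jcoef,
    deriv_powerSum isEntireCoeff_Jcoef.derivCoeff, powerSum_apply_zero]
  norm_num [derivCoeff, Jcoef, eta_add_two, eta]

theorem iteratedDeriv_Jfun_pos (k : ℕ) {x : ℝ} (hx : 0 < x) : 0 < iteratedDeriv k Jfun x := by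
  rw [Jfun_eq_powerSum, iteratedDeriv_powerSum isEntireCoeff_Jcoef]
  have hcoeff : ∀ n, 0 ≤ derivCoeff^[k] Jcoef n := fun n => by
    rw [derivCoeff_iterate_apply]
    exact mul_nonneg (Nat.cast_nonneg _) (Jcoef_nonneg _)
  refine (isEntireCoeff_Jcoef.iterate_derivCoeff k).summable_mul_pow x |>.tsum_pos
    (fun n => mul_nonneg (hcoeff n) (pow_nonneg hx.le n)) (k + 2) (mul_pos ?_ (pow_pos hx _))
  rw [derivCoeff_iterate_apply]
  exact mul_pos (Nat.cast_pos.mpr (Nat.descFactorial_pos.mpr (by omega)))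
    (Jcoef_pos ⟨k + 1, by omega⟩ (by omega))

/-- Properties of `η` and `J = 1 - η`: `η ∈ X_r` for all `r > 0`; `η_n < 0` for even `n ≥ 2`;
the kernel of `L : X_{r₂} → X_{r₁}` is `{cη : c ∈ ℝ}`; `J = Σ_{n≥2} |η_n| xⁿ` satisfies
`L J = 1` on `x > 0`, `J(0) = J'(0) = 0`, `J''(0) = 1/2`, `J^{(k)}(x) > 0` for all `x > 0`
and all `k ≥ 0`, and `‖J‖_r ≤ (1/2) r e^{r²/2}`. -/
theorem eta_and_J_properties :
    (∀ r : ℝ, 0 < r → MemX r eta) ∧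
    (∀ n : ℕ, Even n → 2 ≤ n → eta n < 0) ∧
    (∀ r₁ r₂ : ℝ, 0 < r₁ → r₁ < r₂ →
      {f : ℕ → ℝ | MemX r₂ f ∧ ∀ n, Lcoef f n = 0}
        = {f : ℕ → ℝ | ∃ c : ℝ, f = fun n => c * eta n}) ∧
    (∀ n : ℕ, 2 ≤ n → Jcoef n = |eta n|) ∧
    (∀ r : ℝ, 0 < r → MemX r Jcoef) ∧
    (∀ x : ℝ, 0 < x →
      deriv (deriv Jfun) x + deriv Jfun x * (1 / x - x) + Jfun x = 1) ∧
    Jfun 0 = 0 ∧ deriv Jfun 0 = 0 ∧ deriv (deriv Jfun) 0 = 1 / 2 ∧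
    (∀ k : ℕ, ∀ x : ℝ, 0 < x → 0 < iteratedDeriv k Jfun x) ∧
    (∀ r : ℝ, 0 < r → Xnorm r Jcoef ≤ 1 / 2 * r * Real.exp (r ^ 2 / 2)) := by
  exact ⟨fun _ => memX_eta, fun _ => eta_neg,
    fun _ _ h₁ h₁₂ => setOf_memX_Lcoef_eq_zero (h₁.trans h₁₂), fun _ => Jcoef_eq_abs_eta,
    fun _ => memX_Jcoef, fun _ => L_Jfun_eq_one, Jfun_zero, deriv_Jfun_zero,
    deriv_deriv_Jfun_zero, fun k _ => iteratedDeriv_Jfun_pos k, fun _ => Xnorm_Jcoef_le⟩
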